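/- arXiv:2003.07610 — 2 statements merged into one kernel-verified Lean document; each statement's English description precedes it below -/
import Mathlib

section
/- There is no linear map D : ℂ² ⊗ ℂ² → ℂ² ⊗ ℂ² and orthonormal 'pointer' states p₁, p₂, p₃, p₄ in a Hilbert space such that D is an isometry and D(φᵢ ⊗ φ_d) = φᵢ ⊗ pᵢ for i = 1,2,3,4, where φ₁ = α|0⟩+β|1⟩, φ₂ = β|0⟩+α|1⟩, φ₃ = α|0⟩-β|1⟩, φ₄ = β|0⟩-α|1⟩, φ_d = α|0⟩+β|1⟩, and α, β are reals with α² + β² = 1, αβ ≠ 0, α² ≠ β². (Such a device would record the inner product ⟨φᵢ, φ_d⟩, which takes four distinct values.) -/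
open scoped InnerProductSpace

/-- Kronecker (tensor) product of two finite-dimensional vectors, realising
u ⊗ v concretely as an element of EuclideanSpace ℂ (ι × κ). -/
noncomputable def kron {ι κ : Type*} [Fintype ι] [Fintype κ]
    (u : EuclideanSpace ℂ ι) (v : EuclideanSpace ℂ κ) :
    EuclideanSpace ℂ (ι × κ) :=
  WithLp.toLp 2 (fun p => u p.1 * v p.2)

lemma kron_inner {ι κ : Type*} [Fintype ι] [Fintype κ]
    (u u' : EuclideanSpace ℂ ι) (v v' : EuclideanSpace ℂ κ) :
    ⟪kron u v, kron u' v'⟫_ℂ = ⟪u, u'⟫_ℂ * ⟪v, v'⟫_ℂ := by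
  simp only [kron, PiLp.inner_apply, PiLp.toLp_apply, RCLike.inner_apply, Finset.sum_mul_sum,
    ← Finset.univ_product_univ, Finset.sum_product, map_mul]
  exact Finset.sum_congr rfl fun a _ => Finset.sum_congr rfl fun b _ => by ring

/-- there is no isometric device D with orthonormal pointer
states pᵢ such that D(φᵢ ⊗ φ_d) = φᵢ ⊗ pᵢ for the four states
φ₁ = α|0⟩+β|1⟩, φ₂ = β|0⟩+α|1⟩, φ₃ = α|0⟩-β|1⟩, φ₄ = β|0⟩-α|1⟩ and
φ_d = α|0⟩+β|1⟩, when α² + β² = 1, αβ ≠ 0, α² ≠ β². -/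
theorem no_inner_product_device (α β : ℝ) (h : α ^ 2 + β ^ 2 = 1)
    (hαβ : α * β ≠ 0) (hne : α ^ 2 ≠ β ^ 2)
    (φ : Fin 4 → EuclideanSpace ℂ (Fin 2))
    (hφ : φ = ![!₂[(α : ℂ), (β : ℂ)], !₂[(β : ℂ), (α : ℂ)],
                 !₂[(α : ℂ), (-β : ℂ)], !₂[(β : ℂ), (-α : ℂ)]])
    (φd : EuclideanSpace ℂ (Fin 2)) (hd : φd = ![(α : ℂ), (β : ℂ)]) :
    ¬ ∃ (n : ℕ) (p : Fin 4 → EuclideanSpace ℂ (Fin n))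
        (D : EuclideanSpace ℂ (Fin 2 × Fin 2) →ₗ[ℂ] EuclideanSpace ℂ (Fin 2 × Fin n)),
      (∀ i, ‖p i‖ = 1) ∧ (∀ i j, i ≠ j → ⟪p i, p j⟫_ℂ = 0) ∧
      (∀ x y, ⟪D x, D y⟫_ℂ = ⟪x, y⟫_ℂ) ∧
      (∀ i, D (kron (φ i) φd) = kron (φ i) (p i)) := by
  rintro ⟨n, p, D, hnorm, horth, hiso, hact⟩
  have key := hiso (kron (φ 0) φd) (kron (φ 1) φd)
  rw [hact 0, hact 1, kron_inner, kron_inner, horth 0 1 (by decide), mul_zero] at key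
  have hdd : ⟪φd, φd⟫_ℂ = 1 := by
    rw [PiLp.inner_apply]; simp only [hd]
    simp only [PiLp.inner_apply, RCLike.inner_apply, Fin.sum_univ_two,
      Matrix.cons_val_zero, Matrix.cons_val_one, Matrix.head_cons, Complex.conj_ofReal]
    rw [← Complex.ofReal_mul, ← Complex.ofReal_mul, ← Complex.ofReal_add]
    norm_cast
    linarith [h]
  have h01 : ⟪φ 0, φ 1⟫_ℂ = ((2 * α * β : ℝ) : ℂ) := by
    subst hφ
    simp only [Matrix.cons_val_zero, Matrix.cons_val_one, Matrix.head_cons,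
      PiLp.inner_apply, PiLp.toLp_apply, RCLike.inner_apply, Fin.sum_univ_two, Complex.conj_ofReal]
    push_cast
    ring
  rw [hdd, mul_one, h01] at key
  have h2 : (2 * α * β : ℝ) = 0 := by exact_mod_cast key.symm
  apply hαβ
  linarith
end

section
/- Suppose a function f assigns to each unit vector v ∈ ℂ² a value in {1,2,3,4} such that f(φᵢ) = i for the four pairwise non-proportional states φ₁ = α|0⟩+β|1⟩, φ₂ = β|0⟩+α|1⟩, φ₃ = α|0⟩-β|1⟩, φ₄ = β|0⟩-α|1⟩ (α, β real, α²+β²=1, αβ≠0, α²≠β²), and f is implemented by a POVM {E₁,E₂,E₃,E₄} in the sense that ⟨φᵢ, Eᵢ φᵢ⟩ = 1 for all i. Then ∑ᵢ tr(Eᵢ |φᵢ⟩⟨φᵢ|) = 4, but since ∑ᵢ Eᵢ = Id and each |φᵢ⟩⟨φᵢ| ≤ Id, we have ∑ᵢ tr(Eᵢ |φᵢ⟩⟨φᵢ|) ≤ ∑ᵢ tr(Eᵢ) = tr(Id) = 2, a contradiction. Hence no such POVM exists. -/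
open scoped InnerProductSpace

/-!
For a positive operator `T` and a unit vector `φ`, `⟪φ, T φ⟫ ≤ tr T`: complete `φ` to an
orthonormal basis and compute the trace in it. Hence perfect identification of `n` unit vectors
by a POVM gives `n = ∑ᵢ ⟪φᵢ, Eᵢ φᵢ⟫ ≤ ∑ᵢ tr Eᵢ = tr 1 = dim`, and `4 > 2 = dim ℂ²`.
-/

namespace LinearMap

variable {𝕜 E : Type*} [RCLike 𝕜] [NormedAddCommGroup E] [InnerProductSpace 𝕜 E]
  [FiniteDimensional 𝕜 E]

theorem IsPositive.re_inner_le_re_trace {T : E →ₗ[𝕜] E} (hT : T.IsPositive) {x : E}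
    (hx : ‖x‖ = 1) : RCLike.re ⟪x, T x⟫_𝕜 ≤ RCLike.re (T.trace 𝕜 E) := by
  have hx' : Orthonormal 𝕜 ((↑) : ({x} : Set E) → E) := by simpa using hx
  obtain ⟨u, b, hsub, hb⟩ := hx'.exists_orthonormalBasis_extension
  have hxu : x ∈ u := hsub rfl
  rw [trace_eq_sum_inner T b, hb, map_sum]
  exact Finset.single_le_sum (f := fun i : u ↦ RCLike.re ⟪(i : E), T i⟫_𝕜)
    (fun i _ ↦ hT.re_inner_nonneg_right i) (Finset.mem_univ ⟨x, hxu⟩)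

end LinearMap

theorem card_le_finrank_of_inner_eq_one {𝕜 E ι : Type*} [RCLike 𝕜] [NormedAddCommGroup E]
    [InnerProductSpace 𝕜 E] [FiniteDimensional 𝕜 E] [Fintype ι]
    {M : ι → E →L[𝕜] E} (hpos : ∀ i, (M i).IsPositive) (hsum : ∑ i, M i = 1)
    {φ : ι → E} (hφ : ∀ i, ‖φ i‖ = 1) (hperfect : ∀ i, ⟪φ i, M i (φ i)⟫_𝕜 = 1) :
    Fintype.card ι ≤ Module.finrank 𝕜 E := by
  have : (Fintype.card ι : ℝ) ≤ Module.finrank 𝕜 E :=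
    calc (Fintype.card ι : ℝ) = ∑ i, RCLike.re ⟪φ i, M i (φ i)⟫_𝕜 := by simp [hperfect]
      _ ≤ ∑ i, RCLike.re ((M i : E →ₗ[𝕜] E).trace 𝕜 E) := Finset.sum_le_sum fun i _ ↦
          (hpos i).toLinearMap.re_inner_le_re_trace (hφ i)
      _ = Module.finrank 𝕜 E := by
          rw [← map_sum, ← map_sum, ← ContinuousLinearMap.toLinearMap_sum, hsum]
          simp
  exact_mod_cast this

theorem no_povm_implements_identification_general (α β : ℝ) (h : α ^ 2 + β ^ 2 = 1)
    (φ : Fin 4 → EuclideanSpace ℂ (Fin 2))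
    (hφ : φ = ![!₂[(α : ℂ), (β : ℂ)], !₂[(β : ℂ), (α : ℂ)],
                 !₂[(α : ℂ), (-β : ℂ)], !₂[(β : ℂ), (-α : ℂ)]])
    (E : Fin 4 → (EuclideanSpace ℂ (Fin 2) →L[ℂ] EuclideanSpace ℂ (Fin 2)))
    (hpos : ∀ i, (E i).IsPositive)
    (hsum : ∑ i, E i = 1)
    (hperfect : ∀ i, ⟪φ i, E i (φ i)⟫_ℂ = 1) :
    False := by
  have hunit : ∀ i, ‖φ i‖ = 1 := by
    intro i
    rw [EuclideanSpace.norm_eq, Real.sqrt_eq_one, hφ]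
    fin_cases i <;> simp [Fin.sum_univ_two, h, add_comm]
  have h42 : 4 ≤ 2 := by simpa using card_le_finrank_of_inner_eq_one hpos hsum hunit hperfect
  omega

/-- no POVM {E₁,E₂,E₃,E₄} on ℂ² can implement a function f on
unit vectors identifying each of the four pairwise non-proportional protocol
states with certainty (⟨φᵢ, Eᵢ φᵢ⟩ = 1 for all i): a trace counting argument
(∑ᵢ tr(Eᵢ|φᵢ⟩⟨φᵢ|) = 4 > 2 = tr(Id)) yields a contradiction. -/
theorem no_povm_implements_identification (α β : ℝ) (h : α ^ 2 + β ^ 2 = 1)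
    (hαβ : α * β ≠ 0) (hne : α ^ 2 ≠ β ^ 2)
    (φ : Fin 4 → EuclideanSpace ℂ (Fin 2))
    (hφ : φ = ![!₂[(α : ℂ), (β : ℂ)], !₂[(β : ℂ), (α : ℂ)],
                 !₂[(α : ℂ), (-β : ℂ)], !₂[(β : ℂ), (-α : ℂ)]])
    (f : EuclideanSpace ℂ (Fin 2) → Fin 4) (hf : ∀ i, f (φ i) = i)
    (E : Fin 4 → (EuclideanSpace ℂ (Fin 2) →L[ℂ] EuclideanSpace ℂ (Fin 2)))
    (hpos : ∀ i, (E i).IsPositive)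
    (hsum : ∑ i, E i = 1)
    (hperfect : ∀ i, ⟪φ i, E i (φ i)⟫_ℂ = 1) :
    False :=
  no_povm_implements_identification_general α β h φ hφ E hpos hsum hperfect
end
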